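/- arXiv:1603.01813 — 4 statements merged into one kernel-verified Lean document; each statement's English description precedes it below -/
import Mathlib

section
/- Combining the two previous facts: if φ(y) = ∏_{i=1}^{n+1} P_i(y)^{λ_i} with P_i affine with pairwise distinct roots and λ_i nonzero integers, and I is an open interval containing no root of any P_i, then the equation φ(y) = 1 has at most n+1 solutions in I. -/
/-!
Where no `P_i` vanishes, the logarithmic derivative of `φ` is `∑ λ_i b_i / P_i`, so every critical
point of `φ` in `I` is a root of `Q = ∑ λ_i b_i ∏_{j ≠ i} P_j`, a polynomial of degree at most `n`.
`Q ≠ 0`: at the root of `P_0` only the term `i = 0` survives, as the roots are distinct.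
By Rolle, consecutive solutions of `φ = 1` are separated by critical points.
-/

open Polynomial Finset

/- Continuity suffices: Rolle's theorem yields `deriv f z = 0`, which holds by convention wherever
`f` is not differentiable. -/
theorem card_le_card_add_one_of_deriv_eq_zero_mem {f : ℝ → ℝ} {s : Set ℝ} [s.OrdConnected]
    (hf : ContinuousOn f s) {S T : Finset ℝ} (hS : ↑S ⊆ s) {c : ℝ} (hSc : ∀ x ∈ S, f x = c)
    (hT : ∀ x ∈ s, deriv f x = 0 → x ∈ T) : S.card ≤ T.card + 1 := by
  refine card_le_of_interleaved fun x hx y hy hxy _ => ?_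
  have hIcc : Set.Icc x y ⊆ s := Set.Icc_subset s (hS hx) (hS hy)
  obtain ⟨z, hz, hz'⟩ := exists_deriv_eq_zero hxy (hf.mono hIcc) ((hSc x hx).trans (hSc y hy).symm)
  exact ⟨z, hT z (hIcc (Set.Ioo_subset_Icc_self hz)) hz', hz⟩

section
variable {ι : Type*} [DecidableEq ι] (s : Finset ι)

theorem Finset.prod_mul_sum_div {K : Type*} [Field K] (c x : ι → K) (hx : ∀ i ∈ s, x i ≠ 0) :
    (∏ j ∈ s, x j) * ∑ i ∈ s, c i / x i = ∑ i ∈ s, c i * ∏ j ∈ s.erase i, x j := by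
  rw [mul_sum]
  refine sum_congr rfl fun i hi => ?_
  rw [← mul_prod_erase s x hi]
  field_simp [hx i hi]

theorem Polynomial.natDegree_sum_C_mul_prod_erase_le {R : Type*} [CommSemiring R] (c : ι → R)
    (p : ι → R[X]) (hp : ∀ i ∈ s, (p i).natDegree ≤ 1) :
    (∑ i ∈ s, C (c i) * ∏ j ∈ s.erase i, p j).natDegree ≤ s.card - 1 := by
  refine natDegree_sum_le_of_forall_le _ _ fun i hi => (natDegree_C_mul_le _ _).trans ?_
  calc (∏ j ∈ s.erase i, p j).natDegree ≤ ∑ j ∈ s.erase i, (p j).natDegree := natDegree_prod_le _ _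
    _ ≤ ∑ j ∈ s.erase i, 1 := sum_le_sum fun j hj => hp j (mem_of_mem_erase hj)
    _ = s.card - 1 := by rw [sum_const, smul_eq_mul, mul_one, card_erase_of_mem hi]

theorem Polynomial.eval_sum_C_mul_prod_erase_of_isRoot {R : Type*} [CommSemiring R] (c : ι → R)
    (p : ι → R[X]) {i : ι} (hi : i ∈ s) {r : R} (hr : (p i).IsRoot r) :
    (∑ k ∈ s, C (c k) * ∏ j ∈ s.erase k, p j).eval r = c i * ∏ j ∈ s.erase i, (p j).eval r := by
  rw [eval_finsetSum, sum_eq_single_of_mem i hi fun k _ hki => ?_]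
  · simp [eval_prod]
  · rw [eval_mul, eval_prod,
      prod_eq_zero (f := fun j => (p j).eval r) (mem_erase.2 ⟨hki.symm, hi⟩) hr, mul_zero]

theorem Polynomial.sum_C_mul_prod_erase_ne_zero {R : Type*} [CommRing R] [IsDomain R] (c : ι → R)
    (p : ι → R[X]) {i : ι} (hi : i ∈ s) (hc : c i ≠ 0) {r : R} (hr : (p i).IsRoot r)
    (hroot : ∀ j ∈ s, (p j).IsRoot r → j = i) :
    ∑ k ∈ s, C (c k) * ∏ j ∈ s.erase k, p j ≠ 0 := by
  refine fun h => absurd (eval_sum_C_mul_prod_erase_of_isRoot s c p hi hr) ?_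
  rw [h, eval_zero]
  refine (mul_ne_zero hc (prod_ne_zero_iff.2 fun j hj => ?_)).symm
  exact fun hj' => (ne_of_mem_erase hj) (hroot j (mem_of_mem_erase hj) hj')

end

theorem logDeriv_prod_zpow {𝕜 : Type*} [NontriviallyNormedField 𝕜] {ι : Type*} {s : Finset ι}
    {f : ι → 𝕜 → 𝕜} (l : ι → ℤ) {x : 𝕜} (hf : ∀ i ∈ s, f i x ≠ 0)
    (hd : ∀ i ∈ s, DifferentiableAt 𝕜 (f i) x) :
    logDeriv (fun y => ∏ i ∈ s, f i y ^ l i) x = ∑ i ∈ s, l i * logDeriv (f i) x := by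
  rw [logDeriv_prod (f := fun i y => f i y ^ l i) (fun i hi => zpow_ne_zero _ (hf i hi))
    fun i hi => (hd i hi).zpow (.inl (hf i hi))]
  exact sum_congr rfl fun i hi => logDeriv_fun_zpow (hd i hi) (l i)

theorem logDeriv_const_add_mul {𝕜 : Type*} [NontriviallyNormedField 𝕜] (a b x : 𝕜) :
    logDeriv (fun y => a + b * y) x = b / (a + b * x) := by
  simp [logDeriv_apply]

theorem isRoot_of_deriv_prod_affine_zpow_eq_zero {ι : Type*} [Fintype ι] [DecidableEq ι]
    (a b : ι → ℝ) (l : ι → ℤ) {y : ℝ} (hy : ∀ i, a i + b i * y ≠ 0)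
    (h : deriv (fun y => ∏ i, (a i + b i * y) ^ l i) y = 0) :
    (∑ i, C ((l i : ℝ) * b i) * ∏ j ∈ univ.erase i, (C (a j) + C (b j) * X)).IsRoot y := by
  have hlog : ∑ i, (l i : ℝ) * b i / (a i + b i * y) = 0 := by
    have := logDeriv_prod_zpow (s := univ) (f := fun i y => a i + b i * y) l (fun i _ => hy i)
      fun i _ => by fun_prop
    simp only [logDeriv_const_add_mul] at this
    rw [logDeriv_apply, h, zero_div] at this
    simpa only [mul_div_assoc] using this.symm
  have hsum := prod_mul_sum_div univ (fun i => (l i : ℝ) * b i) _ fun i _ => hy i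
  rw [hlog, mul_zero] at hsum
  simpa [IsRoot.def, eval_finsetSum, eval_prod] using hsum.symm

theorem stmt4 (n : ℕ) (a b : Fin (n+1) → ℝ) (hb : ∀ i, b i ≠ 0)
    (l : Fin (n+1) → ℤ) (hl : ∀ i, l i ≠ 0)
    (P : Fin (n+1) → ℝ → ℝ) (hP : ∀ i y, P i y = a i + b i * y)
    (hdist : ∀ i j (y : ℝ), P i y = 0 → P j y = 0 → i = j)
    (u v : ℝ) (hroots : ∀ y ∈ Set.Ioo u v, ∀ i, P i y ≠ 0)
    (φ : ℝ → ℝ) (hφ : ∀ y, φ y = ∏ i, (P i y) ^ (l i)) :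
    ∀ S : Finset ℝ, ↑S ⊆ Set.Ioo u v → (∀ y ∈ S, φ y = 1) → S.card ≤ n + 1 := by
  intro S hS hS1
  obtain rfl : P = fun i y => a i + b i * y := funext fun i => funext (hP i)
  obtain rfl : φ = fun y => ∏ i, (a i + b i * y) ^ l i := funext hφ
  set Q : ℝ[X] := ∑ i, C ((l i : ℝ) * b i) * ∏ j ∈ univ.erase i, (C (a j) + C (b j) * X)
  have hQ : Q ≠ 0 := by
    have hr : a 0 + b 0 * (-a 0 / b 0) = 0 := by field_simp [hb 0]; ring
    refine sum_C_mul_prod_erase_ne_zero _ _ _ (mem_univ 0)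
      (mul_ne_zero (Int.cast_ne_zero.2 (hl 0)) (hb 0)) (by simpa using hr)
      fun j _ hj => hdist j 0 _ (by simpa using hj) hr
  have hQdeg : Q.natDegree ≤ n := by
    have h := natDegree_sum_C_mul_prod_erase_le univ (fun i => (l i : ℝ) * b i)
      (fun j => C (a j) + C (b j) * X) fun i _ => by rw [add_comm]; exact natDegree_linear_le
    rwa [card_univ, Fintype.card_fin, Nat.add_sub_cancel] at h
  have hcont : ContinuousOn (fun y => ∏ i, (a i + b i * y) ^ l i) (Set.Ioo u v) :=
    continuousOn_finsetProd _ fun i _ => (Continuous.continuousOn (by fun_prop)).zpow₀ _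
      fun y hy => .inl (hroots y hy i)
  have hcrit : ∀ y ∈ Set.Ioo u v,
      deriv (fun y => ∏ i, (a i + b i * y) ^ l i) y = 0 → y ∈ Q.roots.toFinset :=
    fun y hy hy' => by
      rw [Multiset.mem_toFinset, mem_roots hQ]
      exact isRoot_of_deriv_prod_affine_zpow_eq_zero a b l (hroots y hy) hy'
  calc S.card ≤ Q.roots.toFinset.card + 1 :=
        card_le_card_add_one_of_deriv_eq_zero_mem hcont hS hS1 hcrit
    _ ≤ n + 1 := Nat.add_le_add_right
        ((Multiset.toFinset_card_le _).trans ((card_roots' Q).trans hQdeg)) 1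
end

section
/- Suppose a system of n Laurent polynomial equations in n positive real variables has the diagonal form z^{w_i} = P_i(z^{w_{n+1}}) for i = 1,…,n, where w_1,…,w_{n+1} ∈ ℤ^n and the P_i are real affine polynomials. If ∑_{i=1}^{n+1} λ_i w_i = 0 is an integer linear relation, then any positive solution z ∈ ℝ_{>0}^n yields a solution y = z^{w_{n+1}} of the equation ∏_{i=1}^{n+1} P_i(y)^{λ_i} = 1 with P_i(y) > 0 for all i (where P_{n+1}(y) = y). -/
/-!
Each `P i y` equals the monomial `z ^ w i`, which is positive since `z` is. Raising the monomials
to the powers `l i` and multiplying collects, in each coordinate `z k`, the exponent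
`∑ i, l i * w i k`, which vanishes by the linear relation; so the product is `1`.
-/

open Finset

lemma Finset.prod_zpow_eq_zpow_sum₀ {ι G₀ : Type*} [CommGroupWithZero G₀] (s : Finset ι) (f : ι → ℤ)
    {a : G₀} (ha : a ≠ 0) : ∏ i ∈ s, a ^ f i = a ^ ∑ i ∈ s, f i :=
  s.cons_induction (by simp) fun _ _ _ ih => by rw [prod_cons, sum_cons, zpow_add₀ ha, ih]

lemma prod_zpow_monomial_eq_one_of_sum_eq_zero {ι κ G₀ : Type*} [Fintype ι] [Fintype κ]
    [CommGroupWithZero G₀] {z : κ → G₀} (hz : ∀ k, z k ≠ 0) {w : ι → κ → ℤ} {l : ι → ℤ}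
    (hrel : ∀ k, ∑ i, l i * w i k = 0) :
    ∏ i, (∏ k, z k ^ w i k) ^ l i = 1 :=
  calc ∏ i, (∏ k, z k ^ w i k) ^ l i
      = ∏ k, ∏ i, z k ^ (l i * w i k) := by
        simp_rw [← prod_zpow, ← zpow_mul, mul_comm (w _ _)]
        exact prod_comm
    _ = 1 := prod_eq_one fun k _ => by rw [prod_zpow_eq_zpow_sum₀ _ _ (hz k), hrel k, zpow_zero]

theorem stmt8_general (n : ℕ) (w : Fin (n+1) → Fin n → ℤ) (P : Fin (n+1) → ℝ → ℝ)
    (l : Fin (n+1) → ℤ)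
    (hPlast : ∀ y, P (Fin.last n) y = y)
    (hrel : ∀ k, ∑ i, l i * w i k = 0)
    (z : Fin n → ℝ) (hz : ∀ k, 0 < z k)
    (y : ℝ) (hy : y = ∏ k, z k ^ (w (Fin.last n) k))
    (hsys : ∀ i : Fin n, (∏ k, z k ^ (w i.castSucc k)) = P i.castSucc y) :
    (∀ i, 0 < P i y) ∧ ∏ i, (P i y) ^ (l i) = 1 := by
  have hmonomial : ∀ i, P i y = ∏ k, z k ^ w i k := fun i => by
    induction i using Fin.lastCases with
    | last => rw [hPlast, hy]
    | cast j => exact (hsys j).symm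
  simp_rw [hmonomial]
  exact ⟨fun i => prod_pos fun k _ => zpow_pos (hz k) _,
    prod_zpow_monomial_eq_one_of_sum_eq_zero (fun k => (hz k).ne') hrel⟩

theorem stmt8 (n : ℕ) (w : Fin (n+1) → Fin n → ℤ) (P : Fin (n+1) → ℝ → ℝ)
    (l : Fin (n+1) → ℤ)
    (hPaff : ∀ i : Fin n, ∃ a b : ℝ, ∀ y, P i.castSucc y = a + b * y)
    (hPlast : ∀ y, P (Fin.last n) y = y)
    (hrel : ∀ k, ∑ i, l i * w i k = 0)
    (z : Fin n → ℝ) (hz : ∀ k, 0 < z k)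
    (y : ℝ) (hy : y = ∏ k, z k ^ (w (Fin.last n) k))
    (hsys : ∀ i : Fin n, (∏ k, z k ^ (w i.castSucc k)) = P i.castSucc y) :
    (∀ i, 0 < P i y) ∧ ∏ i, (P i y) ^ (l i) = 1 :=
  stmt8_general n w P l hPlast hrel z hz y hy hsys
end

section
/- Let G_t(y) = ∏_{j odd} (1 + t^{α_j} y)^{λ_j} · t^{α_1 λ_1} y^{λ_1} − ∏_{j even} (1 + t^{α_j} y)^{−λ_j} be a difference of two products of powers of affine Viro polynomials, where λ_i > 0 for odd i and λ_i < 0 for even i are integers satisfying the interleaving partial-sum inequalities (so the exponents p_0 < p_1 < ⋯ < p_{n+1} of the lower-hull vertices are strictly increasing). Then for all sufficiently small t > 0, G_t has at least n+1 distinct positive real roots. -/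
/-!
Taking logarithms, `G t y = 0` for `t, y > 0` becomes `logRatio t y = 0`. In the scale
`y = t ^ (-c)` each factor satisfies `log (1 + t ^ β) = min β 0 * log t + O(1)`, so
`logRatio t (t ^ (-c)) = log t * tropLogRatio c + O(1)` as `t → 0⁺`. Between consecutive `α`'s the
piecewise linear `tropLogRatio` is, up to the sign `(-1) ^ k`, the height of the line of slope `c`
above the `k`-th edge of the lower hull. Since `α (k + 1)` is the slope of the chord over the
edges `k` and `k + 1`, it lies strictly between their slopes, which yields `n + 2` increasing
points `c k` at which `tropLogRatio` alternates in sign. For small `t` so does `logRatio` at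
`t ^ (-c k)`, and the intermediate value theorem gives `n + 1` positive roots.
-/

open Finset Filter Topology Real

theorem Real.abs_log_one_add_rpow_sub_le {t : ℝ} (ht : 0 < t) (ht1 : t ≤ 1) (β : ℝ) :
    |log (1 + t ^ β) - min β 0 * log t| ≤ 1 := by
  have hlog : ∀ x : ℝ, 0 ≤ x → x ≤ 1 → |log (1 + x)| ≤ 1 := fun x hx0 hx1 => by
    rw [abs_of_nonneg (log_nonneg (by linarith))]
    linarith [log_le_sub_one_of_pos (by linarith : 0 < 1 + x)]
  rcases le_or_gt 0 β with hβ | hβ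
  · simpa [min_eq_right hβ] using hlog _ (rpow_nonneg ht.le β) (rpow_le_one ht.le ht1 hβ)
  · have hsplit : 1 + t ^ β = t ^ β * (1 + t ^ (-β)) := by
      rw [mul_add, mul_one, ← rpow_add ht, add_neg_cancel, rpow_zero, add_comm]
    rw [min_eq_left hβ.le, hsplit, log_mul (rpow_pos_of_pos ht β).ne' (by positivity),
      log_rpow ht, add_sub_cancel_left]
    exact hlog _ (rpow_nonneg ht.le _) (rpow_le_one ht.le ht1 (by linarith))

theorem abs_sum_log_one_add_rpow_sub_le {ι : Type*} (s : Finset ι) (w β : ι → ℝ) {t : ℝ}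
    (ht : 0 < t) (ht1 : t ≤ 1) :
    |∑ j ∈ s, w j * log (1 + t ^ β j) - log t * ∑ j ∈ s, w j * min (β j) 0|
      ≤ ∑ j ∈ s, |w j| :=
  calc _ = |∑ j ∈ s, w j * (log (1 + t ^ β j) - min (β j) 0 * log t)| := by
        rw [mul_sum, ← sum_sub_distrib]
        exact congrArg _ (sum_congr rfl fun j _ => by ring)
    _ ≤ ∑ j ∈ s, |w j * (log (1 + t ^ β j) - min (β j) 0 * log t)| := abs_sum_le_sum_abs _ _
    _ ≤ ∑ j ∈ s, |w j| := sum_le_sum fun j _ => by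
        rw [abs_mul]
        exact mul_le_of_le_one_right (abs_nonneg _) (abs_log_one_add_rpow_sub_le ht ht1 _)

theorem eventually_neg_of_abs_sub_log_mul_le {F : ℝ → ℝ} {φ C : ℝ} (hφ : 0 < φ)
    (hF : ∀ᶠ t in 𝓝[>] 0, |F t - log t * φ| ≤ C) : ∀ᶠ t in 𝓝[>] 0, F t < 0 := by
  have hlim : Tendsto (fun t => log t * φ + C) (𝓝[>] 0) atBot :=
    tendsto_atBot_add_const_right _ C (tendsto_log_nhdsGT_zero.atBot_mul_const hφ)
  filter_upwards [hF, hlim.eventually_lt_atBot 0] with t hFt hlt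
  linarith [(abs_le.mp hFt).2]

theorem exists_mem_Ioo_eq_zero_of_mul_neg {f : ℝ → ℝ} {a b : ℝ} (hab : a ≤ b)
    (hf : ContinuousOn f (Set.Icc a b)) (hfab : f a * f b < 0) :
    ∃ z ∈ Set.Ioo a b, f z = 0 := by
  rcases mul_neg_iff.mp hfab with ⟨ha, hb⟩ | ⟨ha, hb⟩
  · exact intermediate_value_Ioo' hab hf ⟨hb, ha⟩
  · exact intermediate_value_Ioo hab hf ⟨ha, hb⟩

theorem exists_finset_zeros_of_sign_changes {f : ℝ → ℝ} {s : Set ℝ} (hs : s.OrdConnected)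
    (hf : ContinuousOn f s) {y : ℕ → ℝ} {m : ℕ} (hys : ∀ k ≤ m, y k ∈ s)
    (hy : ∀ k < m, y k < y (k + 1)) (hsign : ∀ k < m, f (y k) * f (y (k + 1)) < 0) :
    ∃ S : Finset ℝ, S.card = m ∧ ∀ z ∈ S, z ∈ s ∧ z < y m ∧ f z = 0 := by
  induction m with
  | zero => exact ⟨∅, rfl, by simp⟩
  | succ m ih =>
    obtain ⟨S, hcard, hS⟩ := ih (fun k hk => hys k (by omega)) (fun k hk => hy k (by omega))
      (fun k hk => hsign k (by omega))
    have hsub : Set.Icc (y m) (y (m + 1)) ⊆ s := hs.out (hys m (by omega)) (hys (m + 1) le_rfl)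
    obtain ⟨z, hz, hfz⟩ := exists_mem_Ioo_eq_zero_of_mul_neg (hy m (by omega)).le
      (hf.mono hsub) (hsign m (by omega))
    have hzS : z ∉ S := fun hzS => (hS z hzS).2.1.not_gt hz.1
    refine ⟨insert z S, by rw [card_insert_of_notMem hzS, hcard], ?_⟩
    simp only [mem_insert, forall_eq_or_imp]
    exact ⟨⟨hsub (Set.Ioo_subset_Icc_self hz), hz.2, hfz⟩,
      fun w hw => ⟨(hS w hw).1, (hS w hw).2.1.trans hz.1 |>.trans hz.2, (hS w hw).2.2⟩⟩

theorem sum_Icc_neg_one_pow_mul_sub_two {R : Type*} [CommRing R] (q : ℕ → R) (k : ℕ) :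
    ∑ j ∈ Icc 1 k, (-1) ^ (j + 1) * (q j - q (j - 2)) = (-1) ^ (k + 1) * (q k - q (k - 1)) := by
  induction k with
  | zero => simp
  | succ k ih =>
    rw [sum_Icc_succ_top (by omega), ih, show k + 1 - 2 = k - 1 by omega, Nat.add_sub_cancel]
    ring

noncomputable def chordSlope (p h : ℕ → ℝ) (i j : ℕ) : ℝ := (h j - h i) / (p j - p i)

noncomputable def logRatio (n : ℕ) (l : ℕ → ℤ) (α : ℕ → ℝ) (t y : ℝ) : ℝ :=
  α 1 * l 1 * log t + l 1 * log y + ∑ j ∈ Icc 2 (n + 1), (l j : ℝ) * log (1 + t ^ α j * y)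

noncomputable def tropLogRatio (n : ℕ) (l : ℕ → ℤ) (α : ℕ → ℝ) (c : ℝ) : ℝ :=
  l 1 * (α 1 - c) + ∑ j ∈ Icc 2 (n + 1), (l j : ℝ) * min (α j - c) 0

section LogRatio

variable {n : ℕ} {l : ℕ → ℤ} {α : ℕ → ℝ} {t : ℝ}

theorem sub_eq_zero_iff_logRatio_eq_zero {y : ℝ} (ht : 0 < t) (hy : 0 < y) :
    t ^ (α 1 * (l 1 : ℝ)) * y ^ (l 1) *
        ∏ j ∈ (Icc 2 (n + 1)).filter (fun j => Odd j), (1 + t ^ (α j) * y) ^ (l j)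
      - ∏ j ∈ (Icc 2 (n + 1)).filter (fun j => Even j), (1 + t ^ (α j) * y) ^ (-(l j)) = 0 ↔
    logRatio n l α t y = 0 := by
  have hfac : ∀ j, 0 < 1 + t ^ α j * y := fun j => by positivity
  have hlog_prod : ∀ (s : Finset ℕ) (e : ℕ → ℤ),
      log (∏ j ∈ s, (1 + t ^ α j * y) ^ e j) = ∑ j ∈ s, e j * log (1 + t ^ α j * y) :=
    fun s e => by
      rw [log_prod fun j _ => (zpow_pos (hfac j) _).ne']
      simp only [log_zpow]
  have hprod : ∀ (s : Finset ℕ) (e : ℕ → ℤ), 0 < ∏ j ∈ s, (1 + t ^ α j * y) ^ e j :=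
    fun s e => prod_pos fun j _ => zpow_pos (hfac j) _
  have hmono : 0 < t ^ (α 1 * (l 1 : ℝ)) * y ^ (l 1) := by positivity
  rw [sub_eq_zero, ← log_injOn_pos.eq_iff (mul_pos hmono (hprod _ _)) (hprod _ _), ← sub_eq_zero,
    log_mul hmono.ne' (hprod _ _).ne', log_mul (by positivity) (by positivity), log_rpow ht,
    log_zpow, hlog_prod, hlog_prod, logRatio,
    ← sum_filter_add_sum_filter_not (Icc 2 (n + 1)) (fun j => Odd j)]
  simp only [Nat.not_odd_iff_even, Int.cast_neg, neg_mul, sum_neg_distrib]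
  rw [sub_neg_eq_add, add_assoc]

theorem continuousOn_logRatio (ht : 0 < t) : ContinuousOn (logRatio n l α t) (Set.Ioi 0) := by
  have : ∀ j, ∀ y ∈ Set.Ioi (0 : ℝ), 1 + t ^ α j * y ≠ 0 := fun j y (hy : 0 < y) => by positivity
  unfold logRatio
  fun_prop (disch := first | exact this _ | exact fun y (hy : 0 < y) => hy.ne')

theorem abs_logRatio_rpow_neg_sub_le (ht : 0 < t) (ht1 : t ≤ 1) (c : ℝ) :
    |logRatio n l α t (t ^ (-c)) - log t * tropLogRatio n l α c|
      ≤ ∑ j ∈ Icc 2 (n + 1), |(l j : ℝ)| := by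
  have hrw : ∀ j, t ^ α j * t ^ (-c) = t ^ (α j - c) := fun j => by
    rw [← rpow_add ht, sub_eq_add_neg]
  convert abs_sum_log_one_add_rpow_sub_le (Icc 2 (n + 1)) (fun j => (l j : ℝ)) (fun j => α j - c)
    ht ht1 using 2
  simp only [logRatio, tropLogRatio, hrw, log_rpow ht]
  ring

theorem eventually_logRatio_mul_neg {c : ℕ → ℝ}
    (hc : ∀ k ≤ n + 1, 0 < (-1) ^ k * tropLogRatio n l α (c k)) :
    ∀ᶠ t in 𝓝[>] 0, ∀ k < n + 1,
      logRatio n l α t (t ^ (-c k)) * logRatio n l α t (t ^ (-c (k + 1))) < 0 := by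
  have hneg : ∀ k ∈ range (n + 2), ∀ᶠ t in 𝓝[>] 0,
      (-1) ^ k * logRatio n l α t (t ^ (-c k)) < 0 := fun k hk =>
    eventually_neg_of_abs_sub_log_mul_le (hc k (by simp at hk; omega)) <| by
      filter_upwards [Ioo_mem_nhdsGT one_pos] with t ht
      rw [mul_left_comm, ← mul_sub, abs_mul, abs_pow, abs_neg, abs_one, one_pow, one_mul]
      exact abs_logRatio_rpow_neg_sub_le ht.1 ht.2.le _
  filter_upwards [(eventually_all_finset _).2 hneg] with t ht k hk
  have h1 := ht k (by simp; omega)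
  have h2 := ht (k + 1) (by simp; omega)
  rcases neg_one_pow_eq_or ℝ k with h | h <;> rw [pow_succ, h] at h2 <;> rw [h] at h1 <;> nlinarith

end LogRatio

theorem chordSlope_mem_Ioo {p h : ℕ → ℝ} {i j k : ℕ} (hij : p i < p j) (hjk : p j < p k)
    (hslope : chordSlope p h i j < chordSlope p h j k) :
    chordSlope p h i k ∈ Set.Ioo (chordSlope p h i j) (chordSlope p h j k) := by
  unfold chordSlope at *
  rw [div_lt_div_iff₀ (by linarith) (by linarith)] at hslope
  constructor <;> rw [div_lt_div_iff₀ (by linarith) (by linarith)] <;> nlinarith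

-- `j - 2` is truncated subtraction: at `j = 1` these identities read `l 1 = p 1 - p 0` and
-- `α 1 = chordSlope p h 0 1`, the slope of the first edge.
theorem intCast_eq_neg_one_pow_mul_sub {l : ℕ → ℤ} {p : ℕ → ℝ}
    (hpodd : ∀ k, p (2 * k + 1) = ∑ j ∈ range (k + 1), (l (2 * j + 1) : ℝ))
    (hpeven : ∀ k, p (2 * k) = -∑ j ∈ range k, (l (2 * j + 2) : ℝ)) :
    ∀ j, 1 ≤ j → (l j : ℝ) = (-1) ^ (j + 1) * (p j - p (j - 2)) := by
  intro j hj
  obtain ⟨k, rfl | rfl⟩ := Nat.even_or_odd' j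
  · obtain ⟨k, rfl⟩ : ∃ k', k = k' + 1 := ⟨k - 1, by omega⟩
    rw [show 2 * (k + 1) - 2 = 2 * k by omega, hpeven, hpeven, sum_range_succ, pow_succ, pow_mul]
    norm_num [mul_add]
  · cases k with
    | zero => simp [hpodd 0, hpeven 0]
    | succ k =>
      rw [show 2 * (k + 1) + 1 - 2 = 2 * k + 1 by omega, hpodd, hpodd, sum_range_succ,
        pow_succ, pow_succ, pow_mul]
      norm_num

section LowerHull

variable {n : ℕ} {p h α : ℕ → ℝ}

theorem chordSlope_pred_lt_and_lt_chordSlope (hp : StrictMonoOn p (Set.Iic (n + 1)))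
    (hs : StrictMonoOn (fun i => chordSlope p h i (i + 1)) (Set.Iic n))
    (hα : ∀ j ∈ Icc 1 (n + 1), α j = chordSlope p h (j - 2) j) {k : ℕ} (hk : k ∈ Icc 1 n) :
    chordSlope p h (k - 1) k < α (k + 1) ∧ α (k + 1) < chordSlope p h k (k + 1) := by
  rw [mem_Icc] at hk
  have hslope := hs (show k - 1 ∈ Set.Iic n by simp; omega) (show k ∈ Set.Iic n by simpa using hk.2)
    (by omega : k - 1 < k)
  simp only [show k - 1 + 1 = k by omega] at hslope
  rw [hα (k + 1) (by simp; omega), show k + 1 - 2 = k - 1 by omega]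
  exact chordSlope_mem_Ioo (hp (by simp; omega) (by simp; omega) (by omega))
    (hp (by simp; omega) (by simp; omega) (by omega)) hslope

theorem le_chordSlope_pred (hp : StrictMonoOn p (Set.Iic (n + 1)))
    (hs : StrictMonoOn (fun i => chordSlope p h i (i + 1)) (Set.Iic n))
    (hα : ∀ j ∈ Icc 1 (n + 1), α j = chordSlope p h (j - 2) j) {k : ℕ} (hk : k ∈ Icc 1 (n + 1)) :
    α k ≤ chordSlope p h (k - 1) k := by
  rw [mem_Icc] at hk
  obtain rfl | hk2 := eq_or_lt_of_le hk.1
  · simpa using (hα 1 (by simp)).le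
  · obtain ⟨k, rfl⟩ : ∃ k', k = k' + 1 := ⟨k - 1, by omega⟩
    exact (chordSlope_pred_lt_and_lt_chordSlope hp hs hα (by simp; omega)).2.le

theorem strictMonoOn_of_chordSlope (hp : StrictMonoOn p (Set.Iic (n + 1)))
    (hs : StrictMonoOn (fun i => chordSlope p h i (i + 1)) (Set.Iic n))
    (hα : ∀ j ∈ Icc 1 (n + 1), α j = chordSlope p h (j - 2) j) :
    StrictMonoOn α (Set.Icc 1 (n + 1)) :=
  strictMonoOn_of_lt_add_one Set.ordConnected_Icc fun k _ hk hk1 =>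
    (le_chordSlope_pred hp hs hα (by simpa using hk)).trans_lt
      (chordSlope_pred_lt_and_lt_chordSlope hp hs hα (by simp at hk hk1 ⊢; omega)).1

theorem neg_one_pow_mul_tropLogRatio {l : ℕ → ℤ}
    (hl : ∀ j, 1 ≤ j → (l j : ℝ) = (-1) ^ (j + 1) * (p j - p (j - 2)))
    (hαp : ∀ j ∈ Icc 1 (n + 1), α j * (p j - p (j - 2)) = h j - h (j - 2))
    {k : ℕ} (hk : k ∈ Icc 1 (n + 1)) {c : ℝ} (hlo : ∀ j ∈ Icc 2 k, α j ≤ c)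
    (hhi : ∀ j ∈ Icc (k + 1) (n + 1), c ≤ α j) :
    (-1) ^ k * tropLogRatio n l α c = c * (p k - p (k - 1)) - (h k - h (k - 1)) := by
  rw [mem_Icc] at hk
  -- only the first `k` factors contribute, and their contributions telescope
  have hsplit : ∑ j ∈ Icc 2 (n + 1), (l j : ℝ) * min (α j - c) 0
      = ∑ j ∈ Ioc 1 k, (l j : ℝ) * (α j - c) := by
    have hzero : ∑ j ∈ Ioc k (n + 1), (l j : ℝ) * min (α j - c) 0 = 0 := sum_eq_zero fun j hj => by
      rw [min_eq_right (sub_nonneg.2 (hhi j (by simp at hj ⊢; omega))), mul_zero]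
    rw [show Icc 2 (n + 1) = Ioc 1 (n + 1) by ext; simp; omega,
      ← sum_Ioc_consecutive _ hk.1 hk.2, hzero, add_zero]
    refine sum_congr rfl fun j hj => ?_
    rw [min_eq_left (sub_nonpos.2 (hlo j (by simp at hj ⊢; omega)))]
  have hterm : ∀ j ∈ Icc 1 k, (l j : ℝ) * (α j - c)
      = (-1) ^ (j + 1) * ((h j - c * p j) - (h (j - 2) - c * p (j - 2))) := by
    intro j hj
    rw [mem_Icc] at hj
    rw [hl j hj.1]
    linear_combination (-1) ^ (j + 1) * hαp j (by simp; omega)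
  have htrop : tropLogRatio n l α c
      = (-1) ^ (k + 1) * ((h k - c * p k) - (h (k - 1) - c * p (k - 1))) := by
    rw [tropLogRatio, hsplit, ← sum_Icc_neg_one_pow_mul_sub_two (fun j => h j - c * p j),
      ← sum_congr rfl hterm, ← sum_Ioc_add_eq_sum_Icc hk.1, add_comm]
  rw [htrop, ← mul_assoc, ← pow_add, (by ring : k + (k + 1) = 2 * k + 1), pow_succ, pow_mul]
  norm_num
  ring

theorem neg_one_pow_mul_tropLogRatio_eq_mul_sub_chordSlope {l : ℕ → ℤ}
    (hl : ∀ j, 1 ≤ j → (l j : ℝ) = (-1) ^ (j + 1) * (p j - p (j - 2)))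
    (hp : StrictMonoOn p (Set.Iic (n + 1)))
    (hs : StrictMonoOn (fun i => chordSlope p h i (i + 1)) (Set.Iic n))
    (hα : ∀ j ∈ Icc 1 (n + 1), α j = chordSlope p h (j - 2) j)
    (k : ℕ) (hk : k ∈ Icc 1 (n + 1)) (c : ℝ) (hlo : 2 ≤ k → α k ≤ c)
    (hhi : k ≤ n → c ≤ α (k + 1)) :
    (-1) ^ k * tropLogRatio n l α c = (p k - p (k - 1)) * (c - chordSlope p h (k - 1) k) := by
  have hαmono := (strictMonoOn_of_chordSlope hp hs hα).monotoneOn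
  have hk' := mem_Icc.mp hk
  have hαp : ∀ j ∈ Icc 1 (n + 1), α j * (p j - p (j - 2)) = h j - h (j - 2) := fun j hj => by
    rw [mem_Icc] at hj
    rw [hα j (by simpa using hj), chordSlope,
      div_mul_cancel₀ _ (sub_pos.2 (hp (by simp; omega) (by simpa using hj.2) (by omega))).ne']
  have hlo' : ∀ j ∈ Icc 2 k, α j ≤ c := fun j hj => by
    rw [mem_Icc] at hj
    exact (hαmono (by simp; omega) (by simp; omega) hj.2).trans (hlo (by omega))
  have hhi' : ∀ j ∈ Icc (k + 1) (n + 1), c ≤ α j := fun j hj => by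
    rw [mem_Icc] at hj
    exact (hhi (by omega)).trans (hαmono (by simp; omega) (by simp; omega) hj.1)
  have hΔp : p k - p (k - 1) ≠ 0 :=
    (sub_pos.2 (hp (by simp; omega) (by simpa using hk'.2) (by omega))).ne'
  rw [neg_one_pow_mul_tropLogRatio hl hαp hk hlo' hhi', chordSlope]
  field_simp [hΔp]

theorem exists_tropLogRatio_sign_alternation {l : ℕ → ℤ}
    (hl : ∀ j, 1 ≤ j → (l j : ℝ) = (-1) ^ (j + 1) * (p j - p (j - 2)))
    (hp : StrictMonoOn p (Set.Iic (n + 1)))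
    (hs : StrictMonoOn (fun i => chordSlope p h i (i + 1)) (Set.Iic n))
    (hα : ∀ j ∈ Icc 1 (n + 1), α j = chordSlope p h (j - 2) j) :
    ∃ c : ℕ → ℝ, (∀ k < n + 1, c k < c (k + 1)) ∧
      ∀ k ≤ n + 1, 0 < (-1) ^ k * tropLogRatio n l α (c k) := by
  have hΔp : ∀ k ∈ Icc 1 (n + 1), 0 < p k - p (k - 1) := fun k hk => by
    rw [mem_Icc] at hk
    exact sub_pos.2 (hp (by simp; omega) (by simpa using hk.2) (by omega))
  have hαmono := (strictMonoOn_of_chordSlope hp hs hα).monotoneOn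
  have hsign := neg_one_pow_mul_tropLogRatio_eq_mul_sub_chordSlope hl hp hs hα
  have hα1 : α 1 = chordSlope p h 0 1 := by simpa using hα 1 (by simp)
  obtain ⟨c, hc0, hcmid, hclast⟩ : ∃ c : ℕ → ℝ, c 0 = α 1 - 1 ∧
      (∀ k ∈ Icc 1 n, c k = α (k + 1)) ∧ c (n + 1) = chordSlope p h n (n + 1) + 1 :=
    ⟨fun k => if k = 0 then α 1 - 1 else if k ≤ n then α (k + 1)
      else chordSlope p h n (n + 1) + 1, by simp,
      fun k hk => by simp at hk; simp [hk.2, show k ≠ 0 by omega], by simp⟩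
  have hle : ∀ k ≤ n, c k ≤ α (k + 1) := fun k hk => by
    obtain rfl | hk0 := Nat.eq_zero_or_pos k
    · rw [hc0]; linarith
    · exact (hcmid k (by simp; omega)).le
  have hslope_lt : ∀ k ∈ Icc 1 (n + 1), chordSlope p h (k - 1) k < c k := fun k hk => by
    rw [mem_Icc] at hk
    rcases Nat.lt_or_ge k (n + 1) with hkn | hkn
    · rw [hcmid k (by simp; omega)]
      exact (chordSlope_pred_lt_and_lt_chordSlope hp hs hα (by simp; omega)).1
    · obtain rfl : k = n + 1 := by omega
      rw [hclast, Nat.add_sub_cancel]; linarith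
  have hgt : ∀ k ∈ Icc 1 (n + 1), α k < c k := fun k hk =>
    (le_chordSlope_pred hp hs hα hk).trans_lt (hslope_lt k hk)
  refine ⟨c, fun k hk => (hle k (by omega)).trans_lt (hgt (k + 1) (by simp; omega)),
    fun k hk => ?_⟩
  obtain rfl | hk0 := Nat.eq_zero_or_pos k
  · have h1 := hsign 1 (by simp) (c 0) (by omega) fun _ => by
      rw [hc0]; linarith [hαmono (a := 1) (b := 2) (by simp) (by simp; omega) (by omega)]
    have hΔp1 := hΔp 1 (by simp)
    rw [hc0, ← hα1, pow_one, neg_one_mul] at h1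
    rw [pow_zero, one_mul, hc0]
    linarith
  · have hk' : k ∈ Icc 1 (n + 1) := by simp; omega
    rw [hsign k hk' (c k) (fun _ => (hgt k hk').le) (hle k)]
    exact mul_pos (hΔp k hk') (sub_pos.2 (hslope_lt k hk'))

end LowerHull

theorem stmt10_general (n : ℕ) (l : ℕ → ℤ)
    (p h : ℕ → ℝ)
    (hpodd : ∀ k, p (2*k+1) = ∑ j ∈ Finset.range (k+1), (l (2*j+1) : ℝ))
    (hpeven : ∀ k, p (2*k) = -∑ j ∈ Finset.range k, (l (2*j+2) : ℝ))
    (hpmono : ∀ i, i ≤ n → p i < p (i+1))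
    (h0 : h 0 = 0)
    (hslope : ∀ i j, i < j → j ≤ n →
      (h (i+1) - h i) / (p (i+1) - p i) < (h (j+1) - h j) / (p (j+1) - p j))
    (α : ℕ → ℝ)
    (hα1 : α 1 = h 1 / p 1)
    (hα2 : α 2 = h 2 / p 2)
    (hαi : ∀ i, 3 ≤ i → i ≤ n+1 → α i = (h i - h (i-2)) / (p i - p (i-2)))
    (G : ℝ → ℝ → ℝ)
    (hG : ∀ t y : ℝ, G t y =
      t ^ (α 1 * (l 1 : ℝ)) * y ^ (l 1) *
        ∏ j ∈ (Finset.Icc 2 (n+1)).filter (fun j => Odd j), (1 + t ^ (α j) * y) ^ (l j)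
      - ∏ j ∈ (Finset.Icc 2 (n+1)).filter (fun j => Even j), (1 + t ^ (α j) * y) ^ (-(l j))) :
    ∃ t0 : ℝ, 0 < t0 ∧ ∀ t : ℝ, 0 < t → t < t0 →
      ∃ S : Finset ℝ, S.card = n + 1 ∧ ∀ y ∈ S, 0 < y ∧ G t y = 0 := by
  have hp0 : p 0 = 0 := by simpa using hpeven 0
  have hα : ∀ j ∈ Icc 1 (n + 1), α j = chordSlope p h (j - 2) j := by
    intro j hj
    rw [mem_Icc] at hj
    rcases (show j = 1 ∨ j = 2 ∨ 3 ≤ j by omega) with rfl | rfl | hj3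
    · simp [chordSlope, hα1, h0, hp0]
    · simp [chordSlope, hα2, h0, hp0]
    · exact hαi j hj3 hj.2
  obtain ⟨c, hc_mono, hc_sign⟩ := exists_tropLogRatio_sign_alternation
    (intCast_eq_neg_one_pow_mul_sub hpodd hpeven)
    (strictMonoOn_of_lt_add_one Set.ordConnected_Iic fun i _ _ hi => hpmono i (by simpa using hi))
    (fun i hi j hj hij => hslope i j hij hj) hα
  obtain ⟨t0, ht0, hsmall⟩ := (nhdsGT_basis 0).eventually_iff.mp
    ((eventually_logRatio_mul_neg hc_sign).and (Ioo_mem_nhdsGT one_pos))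
  refine ⟨t0, ht0, fun t ht htt0 => ?_⟩
  obtain ⟨hsign, -, ht1⟩ := hsmall ⟨ht, htt0⟩
  obtain ⟨S, hcard, hS⟩ := exists_finset_zeros_of_sign_changes Set.ordConnected_Ioi
    (continuousOn_logRatio ht) (y := fun k => t ^ (-c k)) (fun k _ => rpow_pos_of_pos ht _)
    (fun k hk => rpow_lt_rpow_of_exponent_gt ht ht1 (neg_lt_neg (hc_mono k hk))) hsign
  refine ⟨S, hcard, fun y hy => ⟨(hS y hy).1, ?_⟩⟩
  rw [hG, sub_eq_zero_iff_logRatio_eq_zero ht (hS y hy).1]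
  exact (hS y hy).2.2

theorem stmt10 (n : ℕ) (l : ℕ → ℤ)
    (hsign : ∀ i, 1 ≤ i → i ≤ n+2 → (Odd i → 0 < l i) ∧ (Even i → l i < 0))
    (p h : ℕ → ℝ)
    (hpodd : ∀ k, p (2*k+1) = ∑ j ∈ Finset.range (k+1), (l (2*j+1) : ℝ))
    (hpeven : ∀ k, p (2*k) = -∑ j ∈ Finset.range k, (l (2*j+2) : ℝ))
    (hpmono : ∀ i, i ≤ n → p i < p (i+1))
    (h0 : h 0 = 0)
    (hslope : ∀ i j, i < j → j ≤ n →
      (h (i+1) - h i) / (p (i+1) - p i) < (h (j+1) - h j) / (p (j+1) - p j))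
    (α : ℕ → ℝ)
    (hα1 : α 1 = h 1 / p 1)
    (hα2 : α 2 = h 2 / p 2)
    (hαi : ∀ i, 3 ≤ i → i ≤ n+1 → α i = (h i - h (i-2)) / (p i - p (i-2)))
    (G : ℝ → ℝ → ℝ)
    (hG : ∀ t y : ℝ, G t y =
      t ^ (α 1 * (l 1 : ℝ)) * y ^ (l 1) *
        ∏ j ∈ (Finset.Icc 2 (n+1)).filter (fun j => Odd j), (1 + t ^ (α j) * y) ^ (l j)
      - ∏ j ∈ (Finset.Icc 2 (n+1)).filter (fun j => Even j), (1 + t ^ (α j) * y) ^ (-(l j))) :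
    ∃ t0 : ℝ, 0 < t0 ∧ ∀ t : ℝ, 0 < t → t < t0 →
      ∃ S : Finset ℝ, S.card = n + 1 ∧ ∀ y ∈ S, 0 < y ∧ G t y = 0 :=
  stmt10_general n l p h hpodd hpeven hpmono h0 hslope α hα1 hα2 hαi G hG
end

section
/- Let W = {w_1, …, w_{n+2}} ⊂ ℝ^n be the support of a generalized polynomial system with real exponents having N non-degenerate positive solutions. Then for any ε > 0 there exist rational points w̃_i ∈ ℚ^n with |w̃_i − w_i| < ε such that the system with the same coefficients and exponents w̃_i has at least N non-degenerate positive solutions. -/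
noncomputable def sysMap (n m : ℕ) (c : Fin n → Fin m → ℝ) (w : Fin m → Fin n → ℝ)
    (z : Fin n → ℝ) : Fin n → ℝ :=
  fun j => ∑ i, c j i * ∏ k, (z k) ^ (w i k)

def IsNondegPosSol (n m : ℕ) (c : Fin n → Fin m → ℝ) (w : Fin m → Fin n → ℝ)
    (z : Fin n → ℝ) : Prop :=
  (∀ k, 0 < z k) ∧ sysMap n m c w z = 0 ∧
    ∃ f' : (Fin n → ℝ) →L[ℝ] (Fin n → ℝ),
      HasFDerivAt (sysMap n m c w) f' z ∧ LinearMap.det f'.toLinearMap ≠ 0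

/-!
A non-degenerate zero `z₀` of `x ↦ F (w, x)`, with `F` jointly `C¹`, persists: by the implicit
function theorem it moves continuously to a zero `ζ w'` of `x ↦ F (w', x)` for `w'` near `w`, and
it stays non-degenerate since the determinant of the partial derivative is continuous. The system
map is smooth in the exponents and the positive point jointly, so each of the `N` solutions
yields such a branch; distinct branches stay distinct near `w`, and since rational exponent
vectors are dense, one can be chosen in the neighbourhood where all of this holds.
-/

open Filter Topology

section NondegenerateZero

variable (𝕜 : Type*) [RCLike 𝕜] {E : Type*} [NormedAddCommGroup E] [NormedSpace 𝕜 E]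

def IsNondegZero (f : E → E) (x : E) : Prop :=
  f x = 0 ∧ ∃ f' : E →L[𝕜] E, HasFDerivAt f f' x ∧ f'.det ≠ 0

variable {𝕜} {P : Type*} [NormedAddCommGroup P] [NormedSpace 𝕜 P] {F : P × E → E} {p₀ : P} {x₀ : E}

theorem isNondegZero_iff_of_differentiableAt (hF : DifferentiableAt 𝕜 F (p₀, x₀)) :
    IsNondegZero 𝕜 (fun x => F (p₀, x)) x₀ ↔
      F (p₀, x₀) = 0 ∧ (fderiv 𝕜 F (p₀, x₀) ∘L .inr 𝕜 P E).det ≠ 0 := by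
  have hpartial : HasFDerivAt (fun x => F (p₀, x)) (fderiv 𝕜 F (p₀, x₀) ∘L .inr 𝕜 P E) x₀ :=
    hF.hasFDerivAt.comp x₀ (hasFDerivAt_prodMk_right p₀ x₀)
  refine and_congr_right fun _ => ⟨?_, fun hdet => ⟨_, hpartial, hdet⟩⟩
  rintro ⟨f', hf', hdet⟩
  rwa [hf'.unique hpartial] at hdet

variable [FiniteDimensional 𝕜 E] [CompleteSpace P]

theorem IsNondegZero.exists_tendsto (hF : ContDiffAt 𝕜 1 F (p₀, x₀))
    (hz : IsNondegZero 𝕜 (fun x => F (p₀, x)) x₀) :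
    ∃ ζ : P → E, Tendsto ζ (𝓝 p₀) (𝓝 x₀) ∧
      ∀ᶠ p in 𝓝 p₀, IsNondegZero 𝕜 (fun x => F (p, x)) (ζ p) := by
  have := FiniteDimensional.complete 𝕜 E
  obtain ⟨hzero, hdet⟩ :=
    (isNondegZero_iff_of_differentiableAt (hF.differentiableAt one_ne_zero)).1 hz
  have hinv : (fderiv 𝕜 F (p₀, x₀) ∘L .inr 𝕜 P E).IsInvertible :=
    ⟨_, ContinuousLinearMap.coe_toContinuousLinearEquivOfDetNeZero _ hdet⟩
  let ζ := hF.implicitFunction one_ne_zero hinv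
  have hζ : Tendsto ζ (𝓝 p₀) (𝓝 x₀) :=
    (hF.hasStrictFDerivAt one_ne_zero).tendsto_implicitFunctionOfProdDomain hinv
  have hdet_cont : ContinuousAt (fun u => (fderiv 𝕜 F u ∘L .inr 𝕜 P E).det) (p₀, x₀) :=
    (ContinuousLinearMap.continuous_det.comp (continuous_id.clm_comp_const _)).continuousAt.comp
      (hF.continuousAt_fderiv one_ne_zero)
  have hnear : ∀ᶠ u in 𝓝 (p₀, x₀),
      ContDiffAt 𝕜 1 F u ∧ (fderiv 𝕜 F u ∘L .inr 𝕜 P E).det ≠ 0 :=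
    (hF.eventually (by simp)).and (hdet_cont.eventually_ne hdet)
  refine ⟨ζ, hζ, ?_⟩
  filter_upwards [hF.eventually_apply_implicitFunction one_ne_zero hinv,
    (tendsto_id.prodMk_nhds hζ).eventually hnear] with p hp ⟨hC, hd⟩
  exact (isNondegZero_iff_of_differentiableAt (hC.differentiableAt one_ne_zero)).2
    ⟨hp.trans hzero, hd⟩

end NondegenerateZero

theorem contDiffAt_sysMap_uncurry {n m : ℕ} (c : Fin n → Fin m → ℝ) {r : WithTop ℕ∞}
    {p : (Fin m → Fin n → ℝ) × (Fin n → ℝ)} (hp : ∀ k, 0 < p.2 k) :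
    ContDiffAt ℝ r (fun p => sysMap n m c p.1 p.2) p := by
  rw [contDiffAt_pi]
  intro j
  refine ContDiffAt.sum fun i _ => contDiffAt_const.mul (contDiffAt_prod fun k _ => ?_)
  exact ContDiffAt.rpow (by fun_prop) (by fun_prop) (hp k).ne'

theorem IsNondegPosSol.exists_tendsto {n m : ℕ} {c : Fin n → Fin m → ℝ}
    {w : Fin m → Fin n → ℝ} {z₀ : Fin n → ℝ} (h : IsNondegPosSol n m c w z₀) :
    ∃ ζ : (Fin m → Fin n → ℝ) → Fin n → ℝ, Tendsto ζ (𝓝 w) (𝓝 z₀) ∧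
      ∀ᶠ w' in 𝓝 w, IsNondegPosSol n m c w' (ζ w') := by
  obtain ⟨hpos, hz⟩ := h
  obtain ⟨ζ, hζ, hev⟩ := IsNondegZero.exists_tendsto (F := fun p => sysMap n m c p.1 p.2)
    (contDiffAt_sysMap_uncurry c (p := (w, z₀)) hpos) hz
  have hpos_near : ∀ᶠ w' in 𝓝 w, ∀ k, 0 < ζ w' k :=
    eventually_all.2 fun k => hζ.eventually (((continuous_apply k).tendsto z₀).eventually
      (lt_mem_nhds (hpos k)))
  refine ⟨ζ, hζ, ?_⟩
  filter_upwards [hev, hpos_near] with w' hw' hpos'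
  exact ⟨hpos', hw'⟩

theorem eventually_injOn_of_tendsto {X α : Type*} [TopologicalSpace X] [T2Space X]
    {l : Filter α} (S : Finset X) {ζ : X → α → X} (hζ : ∀ x ∈ S, Tendsto (ζ x) l (𝓝 x)) :
    ∀ᶠ a in l, Set.InjOn (fun x => ζ x a) S := by
  have hsep : ∀ x ∈ S, ∀ y ∈ S, ∀ᶠ a in l, x ≠ y → ζ x a ≠ ζ y a := fun x hx y hy => by
    by_cases hxy : x = y
    · exact .of_forall fun _ h => absurd hxy h
    · exact ((hζ x hx).prodMk_nhds (hζ y hy)).eventually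
        (isClosed_diagonal.isOpen_compl.mem_nhds hxy) |>.mono fun _ h _ => h
  filter_upwards [(eventually_all_finset S).2 fun x hx => (eventually_all_finset S).2 (hsep x hx)]
    with a ha x hx y hy hxy
  by_contra hne
  exact ha x hx y hy hne hxy

theorem denseRange_ratCast_pi_pi {ι κ : Type*} :
    DenseRange (fun q : ι → κ → ℚ => fun i k => (q i k : ℝ)) :=
  DenseRange.piMap fun _ => DenseRange.piMap fun _ => Rat.denseRange_cast

theorem stmt18 (n N : ℕ) (c : Fin n → Fin (n+2) → ℝ) (w : Fin (n+2) → Fin n → ℝ)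
    (S : Finset (Fin n → ℝ)) (hScard : S.card = N)
    (hS : ∀ z ∈ S, IsNondegPosSol n (n+2) c w z) :
    ∀ ε : ℝ, 0 < ε → ∃ q : Fin (n+2) → Fin n → ℚ,
      (∀ i k, |(q i k : ℝ) - w i k| < ε) ∧
      ∃ T : Finset (Fin n → ℝ), N ≤ T.card ∧
        ∀ z ∈ T, IsNondegPosSol n (n+2) c (fun i k => (q i k : ℝ)) z := by
  intro ε hε
  choose! ζ hζ hsol using fun z hz => (hS z hz).exists_tendsto
  have hclose : ∀ᶠ w' in 𝓝 w, ∀ i k, |w' i k - w i k| < ε :=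
    eventually_all.2 fun i => eventually_all.2 fun k =>
      ((continuous_apply_apply i k).tendsto w).eventually (Metric.ball_mem_nhds _ hε)
  obtain ⟨q, hq, hqsol, hqinj⟩ := denseRange_ratCast_pi_pi.mem_nhds
    (hclose.and (((eventually_all_finset S).2 hsol).and (eventually_injOn_of_tendsto S hζ)))
  exact ⟨q, hq, S.image fun z => ζ z _, by rw [Finset.card_image_of_injOn hqinj, hScard],
    by simpa using hqsol⟩
end
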